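/- Let X be a set, Y a finite set, and ℋ ⊆ Y^X a family such that for every probability measure μ on X and every ε ∈ (0,1) there is a subset ℋ' ⊆ ℋ with |ℋ'| ≤ M(ε) (for some function M independent of μ) such that every F ∈ ℋ satisfies μ({x : F(x) ≠ H(x)}) ≤ ε for some H ∈ ℋ'. Then the Natarajan dimension of ℋ is finite; more precisely, Nat(ℋ) ≤ min over ε ∈ (0,1/2) of ⌊log₂⌊M(ε)⌋ / (1 − h₂(ε))⌋. -/

import Mathlib

open MeasureTheory

/-- Binary entropy function. -/
noncomputable def binEnt (t : ℝ) : ℝ :=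
  t * Real.logb 2 (1 / t) + (1 - t) * Real.logb 2 (1 / (1 - t))

/-- `ℱ` Natarajan-shatters the finite set `A`. -/
def NatShatters {X Y : Type*} [DecidableEq X] (ℱ : Set (X → Y)) (A : Finset X) : Prop :=
  ∃ f₀ f₁ : X → Y, (∀ a ∈ A, f₀ a ≠ f₁ a) ∧
    ∀ U ⊆ A, ∃ g ∈ ℱ, ∀ a ∈ A, g a = if a ∈ U then f₁ a else f₀ a

/-!
Put the uniform distribution on a Natarajan-shattered set `A` of `d` points. Each pattern
`U ⊆ A` is realised by some `g ∈ ℋ`, which is `ε`-close to a centre `H ∈ ℋ'`; the points where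
`g` and `H` disagree include `U ∆ {a ∈ A | H a = f₁ a}`, so `U` lies in the Hamming ball of
radius `ε d` around a set determined by `H`. Weighting subsets `V` by `ε ^ #V (1 - ε) ^ (d - #V)`,
which sum to `1`, shows such a ball has at most `2 ^ (h₂(ε) d)` points, hence
`2 ^ d ≤ M(ε) 2 ^ (h₂(ε) d)`.
-/

open Finset Real
open scoped symmDiff

lemma binEnt_eq_binEntropy_div_log_two (t : ℝ) : binEnt t = binEntropy t / log 2 := by
  simp only [binEnt, binEntropy, logb, one_div]
  ring

lemma binEnt_lt_one {ε : ℝ} (hε : ε ≠ 2⁻¹) : binEnt ε < 1 := by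
  rw [binEnt_eq_binEntropy_div_log_two, div_lt_one (log_pos one_lt_two)]
  exact binEntropy_lt_log_two.2 hε

lemma exp_neg_binEntropy_mul_le {ε : ℝ} (hε₀ : 0 < ε) (hε : ε ≤ 1 / 2) {d i : ℕ}
    (hi : (i : ℝ) ≤ ε * d) : exp (-(binEntropy ε * d)) ≤ ε ^ i * (1 - ε) ^ (d - i) := by
  have hq : 0 < 1 - ε := by linarith
  have hid : i ≤ d := by
    have : (i : ℝ) ≤ d := hi.trans (by nlinarith [(d.cast_nonneg : (0 : ℝ) ≤ d)])
    exact_mod_cast this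
  have hlog : log ε ≤ log (1 - ε) := log_le_log hε₀ (by linarith)
  rw [← exp_log (by positivity : 0 < ε ^ i * (1 - ε) ^ (d - i)), exp_le_exp,
    log_mul (by positivity) (by positivity), log_pow, log_pow, Nat.cast_sub hid, binEntropy,
    log_inv, log_inv]
  -- the difference of the two sides is `(ε * d - i) * (log (1 - ε) - log ε) ≥ 0`
  nlinarith [mul_nonneg (sub_nonneg.2 hi) (sub_nonneg.2 hlog)]

lemma card_filter_powerset_card_le_exp_binEntropy {α : Type*} (A : Finset α) {ε : ℝ}
    (hε₀ : 0 < ε) (hε : ε ≤ 1 / 2) :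
    (#{V ∈ A.powerset | (#V : ℝ) ≤ ε * #A} : ℝ) ≤ exp (binEntropy ε * #A) := by
  have key : ∑ _ ∈ A.powerset with (#_ : ℝ) ≤ ε * #A, exp (-(binEntropy ε * #A)) ≤ 1 := calc
    _ ≤ ∑ V ∈ A.powerset with (#V : ℝ) ≤ ε * #A, ε ^ #V * (1 - ε) ^ (#A - #V) :=
        sum_le_sum fun V hV ↦ exp_neg_binEntropy_mul_le hε₀ hε (mem_filter.1 hV).2
    _ ≤ ∑ V ∈ A.powerset, ε ^ #V * (1 - ε) ^ (#A - #V) :=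
        sum_le_sum_of_subset_of_nonneg (filter_subset _ _) fun _ _ _ ↦ by
          have : 0 < 1 - ε := by linarith
          positivity
    _ = 1 := by rw [sum_pow_mul_eq_add_pow, add_sub_cancel, one_pow]
  rwa [sum_const, nsmul_eq_mul, exp_neg, ← div_eq_mul_inv, div_le_one (exp_pos _)] at key

section Shattering

variable {X Y : Type*} [DecidableEq X] [DecidableEq Y]

lemma symmDiff_filter_eq_subset_filter_ne {A U : Finset X} (hU : U ⊆ A) {f₀ f₁ : X → Y}
    (hne : ∀ a ∈ A, f₀ a ≠ f₁ a) (H : X → Y) :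
    U ∆ {a ∈ A | H a = f₁ a} ⊆ {a ∈ A | H a ≠ if a ∈ U then f₁ a else f₀ a} := by
  intro a ha
  rcases mem_symmDiff.1 ha with ⟨haU, haH⟩ | ⟨haH, haU⟩
  · simp_all [hU haU]
  · obtain ⟨haA, hHa⟩ := mem_filter.1 haH
    simp [haA, haU, hHa, (hne a haA).symm]

lemma two_pow_card_le_card_mul_card_filter_powerset {A : Finset X} {f₀ f₁ : X → Y}
    (hne : ∀ a ∈ A, f₀ a ≠ f₁ a) (ℋ' : Finset (X → Y)) (r : ℝ)
    (hcover : ∀ U ⊆ A, ∃ H ∈ ℋ', (#{a ∈ A | H a ≠ if a ∈ U then f₁ a else f₀ a} : ℝ) ≤ r) :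
    2 ^ #A ≤ #ℋ' * #{V ∈ A.powerset | (#V : ℝ) ≤ r} := by
  have : Nonempty (X → Y) := ⟨f₀⟩
  choose! H hHmem hHdist using hcover
  -- `U` is recovered from `H U` and from its symmetric difference with the pattern of `H U`
  rw [← card_powerset, ← card_product]
  refine card_le_card_of_injOn (fun U ↦ (H U, U ∆ {a ∈ A | H U a = f₁ a}))
    (fun U hU ↦ ?_) (fun U₁ _ U₂ _ h ↦ ?_)
  · rw [mem_coe, mem_powerset] at hU
    have hsub := symmDiff_filter_eq_subset_filter_ne hU hne (H U)
    exact mem_product.2 ⟨hHmem U hU, mem_filter.2 ⟨mem_powerset.2 (hsub.trans (filter_subset _ _)),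
      (Nat.cast_le.2 (card_le_card hsub)).trans (hHdist U hU)⟩⟩
  · obtain ⟨hH, hΔ⟩ := Prod.mk.inj h
    rw [hH] at hΔ
    exact symmDiff_left_injective _ hΔ

end Shattering

lemma card_filter_mem_le_card_mul_toReal_uniformOfFinset {X : Type*} [MeasurableSpace X]
    {A : Finset X} (hA : A.Nonempty) (S : Set X) [DecidablePred (· ∈ S)] :
    (#{a ∈ A | a ∈ S} : ℝ) ≤ #A * ((PMF.uniformOfFinset A hA).toMeasure S).toReal := by
  classical
  have h := (PMF.uniformOfFinset A hA).toOuterMeasure_apply_le_toMeasure_apply S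
  rw [PMF.toOuterMeasure_uniformOfFinset_apply] at h
  have h' := ENNReal.toReal_mono (measure_ne_top _ _) h
  rw [ENNReal.toReal_div, ENNReal.toReal_natCast, ENNReal.toReal_natCast,
    div_le_iff₀' (by exact_mod_cast hA.card_pos)] at h'
  -- `h'` filters with the classical decidability instance
  exact (le_of_eq (by congr)).trans h'

lemma natCast_le_logb_div_of_two_pow_le {ε : ℝ} (hε : binEnt ε < 1) {d m : ℕ}
    (h : (2 : ℝ) ^ d ≤ m * exp (binEntropy ε * d)) : (d : ℝ) ≤ logb 2 m / (1 - binEnt ε) := by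
  have hm : (0 : ℝ) < m := (mul_pos_iff_of_pos_right (exp_pos _)).1 ((pow_pos two_pos d).trans_le h)
  have hlog := log_le_log (pow_pos two_pos d) h
  rw [log_pow, log_mul hm.ne' (exp_pos _).ne', log_exp] at hlog
  have hlog2 : 0 < log 2 := log_pos one_lt_two
  rw [le_div_iff₀ (sub_pos.2 hε), binEnt_eq_binEntropy_div_log_two, logb]
  field_simp
  linarith

theorem stmt9_general {X Y : Type*} [DecidableEq X] {mX : MeasurableSpace X}
    (ℋ : Set (X → Y)) (M : ℝ → ℝ)
    (hpack : ∀ μ : Measure X, IsProbabilityMeasure μ → ∀ ε : ℝ, 0 < ε → ε < 1 →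
      ∃ ℋ' : Finset (X → Y), ↑ℋ' ⊆ ℋ ∧ (ℋ'.card : ℝ) ≤ M ε ∧
        ∀ F ∈ ℋ, ∃ H ∈ ℋ', (μ {x | F x ≠ H x}).toReal ≤ ε) :
    ∀ A : Finset X, NatShatters ℋ A → ∀ ε : ℝ, 0 < ε → ε < 1 / 2 →
      (A.card : ℤ) ≤ ⌊Real.logb 2 (⌊M ε⌋₊ : ℝ) / (1 - binEnt ε)⌋ := by
  intro A ⟨f₀, f₁, hne, hshatter⟩ ε hε₀ hε
  have hbinEnt : binEnt ε < 1 := binEnt_lt_one (hε.trans_eq (one_div 2)).ne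
  rw [Int.le_floor, Int.cast_natCast]
  rcases A.eq_empty_or_nonempty with rfl | hA
  · rw [card_empty, Nat.cast_zero]
    exact div_nonneg (div_nonneg (log_natCast_nonneg _) (log_nonneg one_le_two))
      (sub_pos.2 hbinEnt).le
  classical
  obtain ⟨ℋ', -, hcard, hcover⟩ :=
    hpack (PMF.uniformOfFinset A hA).toMeasure inferInstance ε hε₀ (by linarith)
  have hpattern : ∀ U ⊆ A, ∃ H ∈ ℋ',
      (#{a ∈ A | H a ≠ if a ∈ U then f₁ a else f₀ a} : ℝ) ≤ ε * #A := by
    intro U hU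
    obtain ⟨g, hgℋ, hg⟩ := hshatter U hU
    obtain ⟨H, hH, hgH⟩ := hcover g hgℋ
    refine ⟨H, hH, ?_⟩
    rw [filter_congr fun a ha ↦ by rw [← hg a ha, ne_comm]]
    exact (card_filter_mem_le_card_mul_toReal_uniformOfFinset hA {x | g x ≠ H x}).trans
      (by rw [mul_comm]; exact mul_le_mul_of_nonneg_right hgH (Nat.cast_nonneg _))
  refine natCast_le_logb_div_of_two_pow_le hbinEnt ?_
  calc (2 : ℝ) ^ #A ≤ #ℋ' * #{V ∈ A.powerset | (#V : ℝ) ≤ ε * #A} := by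
        exact_mod_cast two_pow_card_le_card_mul_card_filter_powerset hne ℋ' _ hpattern
    _ ≤ ⌊M ε⌋₊ * exp (binEntropy ε * #A) :=
        mul_le_mul (Nat.cast_le.2 (Nat.le_floor hcard))
          (card_filter_powerset_card_le_exp_binEntropy A hε₀ hε.le) (by positivity) (by positivity)

/-- Haussler packing (with 0/1-loss) implies finite Natarajan dimension (the `k = 1` case). -/
theorem stmt9 {X Y : Type*} [DecidableEq X] {mX : MeasurableSpace X} (hmX : mX = ⊤)
    [Fintype Y] (ℋ : Set (X → Y)) (M : ℝ → ℝ)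
    (hpack : ∀ μ : Measure X, IsProbabilityMeasure μ → ∀ ε : ℝ, 0 < ε → ε < 1 →
      ∃ ℋ' : Finset (X → Y), ↑ℋ' ⊆ ℋ ∧ (ℋ'.card : ℝ) ≤ M ε ∧
        ∀ F ∈ ℋ, ∃ H ∈ ℋ', (μ {x | F x ≠ H x}).toReal ≤ ε) :
    ∀ A : Finset X, NatShatters ℋ A → ∀ ε : ℝ, 0 < ε → ε < 1 / 2 →
      (A.card : ℤ) ≤ ⌊Real.logb 2 (⌊M ε⌋₊ : ℝ) / (1 - binEnt ε)⌋ :=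
  stmt9_general (mX := mX) ℋ M hpack
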